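/- For every h > 0, the functional f_h(t, u) = t² + ‖Su‖²_{L²} − (1/2)‖u‖²_{L²} − h·t has no local minimizer on the closed convex cone C = {(t,u) ∈ ℝ × L²(0,1) : |u| ≤ t a.e.}. -/

import Mathlib

/-!
If `t < h/2`, raising `t` lowers `f_h`; so at a local minimizer `(t, u)` we have `t > 0`, and `u`
must locally minimize `‖S v‖² - ‖v‖²/2` over `|v| ≤ t`. Reversing the sign of `u` on a set `B`
preserves `|u|` and `‖u‖`, and changes `‖S u‖²` by `-4⟪S u, S(1_B u)⟫ + 4‖S(1_B u)‖²`.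
Since `∫ u · S*S u = ‖S u‖²`, if `S u ≠ 0` there are `c, M > 0` and sets `B` of arbitrarily small
measure `θ > 0` on which `u · S*S u ≥ c` and `|u| ≤ M`. The first term is then at most `-4cθ`,
while `‖S w‖ ≤ ‖w‖_{L¹}` bounds the second by `4M²θ²`. If `S u = 0` then `u = 0`, because `S` is
injective by the Lebesgue differentiation theorem, and a small multiple of `1_(0,1/4)` lowers
the functional, since `‖S 1_(0,1/4)‖² ≤ 1/16 < 1/8 = ‖1_(0,1/4)‖²/2`.
-/

open MeasureTheory Set

noncomputable def μ01 : Measure ℝ := volume.restrict (Ioo 0 1)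

open Filter
open scoped RealInnerProductSpace

instance : IsProbabilityMeasure μ01 := ⟨by simp [μ01]⟩

lemma not_isLocalMinOn_of_forall_exists_lt {X : Type*} [PseudoMetricSpace X] {f : X → ℝ}
    {s : Set X} {p : X} (H : ∀ ε > 0, ∃ q ∈ s, dist q p < ε ∧ f q < f p) :
    ¬ IsLocalMinOn f s p := by
  intro hmin
  obtain ⟨ε, hε, hball⟩ := Metric.mem_nhdsWithin_iff.1 hmin
  obtain ⟨q, hqs, hqp, hlt⟩ := H ε hε
  exact (hlt.trans_le (hball ⟨hqp, hqs⟩)).false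

lemma norm_sub_two_smul_sq {E : Type*} [NormedAddCommGroup E] [InnerProductSpace ℝ E] (x y : E) :
    ‖x - (2 : ℝ) • y‖ ^ 2 = ‖x‖ ^ 2 - 4 * ⟪x, y⟫ + 4 * ‖y‖ ^ 2 := by
  rw [norm_sub_sq_real, real_inner_smul_right, norm_smul, Real.norm_two]
  ring

lemma exists_measure_setOf_le_and_abs_le_ne_zero {α : Type*} [MeasurableSpace α]
    {μ : Measure α} {g : α → ℝ} (hg : 0 < ∫ x, g x ∂μ) (f : α → ℝ) :
    ∃ c > 0, ∃ M > 0, μ {x | c ≤ g x ∧ |f x| ≤ M} ≠ 0 := by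
  have hpos : μ {x | 0 < g x} ≠ 0 := by
    intro hnull
    have hg_nonpos : ∀ᵐ x ∂μ, g x ≤ 0 := by
      simpa only [ae_iff, not_le] using hnull
    exact (integral_nonpos_of_ae hg_nonpos).not_gt hg
  by_contra! hnull
  refine hpos (measure_mono_null ?_ (measure_iUnion_null fun n : ℕ => measure_iUnion_null
    fun m : ℕ => hnull (1 / (n + 1)) (by positivity) (m + 1) (by positivity)))
  intro x (hx : 0 < g x)
  obtain ⟨n, hn⟩ := exists_nat_one_div_lt hx
  obtain ⟨m, hm⟩ := exists_nat_ge |f x|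
  exact mem_iUnion₂.2 ⟨n, m, hn.le, hm.trans (by linarith)⟩

lemma exists_subset_measureReal_pos_le {μ : Measure ℝ} (hμ : μ ≤ volume) {P : Set ℝ}
    (hP : MeasurableSet P) (hP0 : μ P ≠ 0) {δ : ℝ} (hδ : 0 < δ) :
    ∃ B ⊆ P, MeasurableSet B ∧ 0 < μ.real B ∧ μ.real B ≤ δ := by
  obtain ⟨n, hn⟩ : ∃ n : ℤ, μ (P ∩ Ico (n • δ) ((n + 1) • δ)) ≠ 0 := by
    by_contra! h
    refine hP0 (measure_mono_null ?_ (measure_iUnion_null h))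
    rw [← inter_iUnion, iUnion_Ico_zsmul hδ, inter_univ]
  have hle : μ (P ∩ Ico (n • δ) ((n + 1) • δ)) ≤ ENNReal.ofReal δ :=
    calc μ (P ∩ Ico (n • δ) ((n + 1) • δ)) ≤ volume (Ico (n • δ) ((n + 1) • δ)) :=
          (measure_mono inter_subset_right).trans (Measure.le_iff'.1 hμ _)
      _ = ENNReal.ofReal δ := by rw [Real.volume_Ico, add_smul, one_smul, add_sub_cancel_left]
  exact ⟨_, inter_subset_left, hP.inter measurableSet_Ico,
    ENNReal.toReal_pos hn (hle.trans_lt ENNReal.ofReal_lt_top).ne,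
    ENNReal.toReal_le_of_le_ofReal hδ.le hle⟩

section IndicatorLp

variable {α : Type*} [MeasurableSpace α] {μ : Measure α} {B : Set α}

lemma MeasureTheory.L2.real_inner_eq_integral (f g : Lp ℝ 2 μ) : ⟪f, g⟫ = ∫ x, f x * g x ∂μ := by
  simp only [L2.inner_def, RCLike.inner_apply, conj_trivial, mul_comm]

noncomputable def indicatorLp (u : Lp ℝ 2 μ) (hB : MeasurableSet B) : Lp ℝ 2 μ :=
  ((Lp.memLp u).indicator hB).toLp _

lemma coeFn_indicatorLp (u : Lp ℝ 2 μ) (hB : MeasurableSet B) :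
    indicatorLp u hB =ᵐ[μ] B.indicator u :=
  MemLp.coeFn_toLp _

lemma inner_indicatorLp (y u : Lp ℝ 2 μ) (hB : MeasurableSet B) :
    ⟪y, indicatorLp u hB⟫ = ∫ x in B, y x * u x ∂μ := by
  rw [L2.real_inner_eq_integral, ← integral_indicator hB]
  refine integral_congr_ae ?_
  filter_upwards [coeFn_indicatorLp u hB] with x hx
  by_cases hxB : x ∈ B <;> simp [hx, hxB]

lemma inner_indicatorLp_self (u : Lp ℝ 2 μ) (hB : MeasurableSet B) :
    ⟪u, indicatorLp u hB⟫ = ‖indicatorLp u hB‖ ^ 2 := by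
  rw [← real_inner_self_eq_norm_sq, inner_indicatorLp, real_inner_comm, inner_indicatorLp]
  refine setIntegral_congr_ae hB ?_
  filter_upwards [coeFn_indicatorLp u hB] with x hx hxB
  rw [hx, indicator_of_mem hxB]

lemma MeasureTheory.L2.integrable_mul (f g : Lp ℝ 2 μ) : Integrable (fun x => f x * g x) μ := by
  simpa only [RCLike.inner_apply, conj_trivial, mul_comm] using L2.integrable_inner (𝕜 := ℝ) f g

lemma integral_abs_indicatorLp_le [IsFiniteMeasure μ] {u : Lp ℝ 2 μ} (hB : MeasurableSet B)
    {M : ℝ} (hM : ∀ᵐ x ∂μ, x ∈ B → |u x| ≤ M) :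
    ∫ x, |indicatorLp u hB x| ∂μ ≤ M * μ.real B := by
  have hu : Integrable u μ := (Lp.memLp u).integrable one_le_two
  calc ∫ x, |indicatorLp u hB x| ∂μ = ∫ x in B, |u x| ∂μ := by
        rw [← integral_indicator hB]
        refine integral_congr_ae ?_
        filter_upwards [coeFn_indicatorLp u hB] with x hx
        by_cases hxB : x ∈ B <;> simp [hx, hxB]
    _ ≤ ∫ _ in B, M ∂μ :=
        setIntegral_mono_ae_restrict hu.abs.integrableOn integrableOn_const
          ((ae_restrict_iff' hB).2 hM)
    _ = M * μ.real B := by rw [setIntegral_const, smul_eq_mul, mul_comm]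

lemma norm_indicatorLp_sq_le [IsFiniteMeasure μ] {u : Lp ℝ 2 μ} (hB : MeasurableSet B)
    {M : ℝ} (hM : ∀ᵐ x ∂μ, x ∈ B → |u x| ≤ M) :
    ‖indicatorLp u hB‖ ^ 2 ≤ M ^ 2 * μ.real B := by
  calc ‖indicatorLp u hB‖ ^ 2 = ∫ x in B, u x * u x ∂μ := by
        rw [← inner_indicatorLp_self, inner_indicatorLp]
    _ ≤ ∫ _ in B, M ^ 2 ∂μ := by
        refine setIntegral_mono_ae_restrict (L2.integrable_mul u u).integrableOn
          integrableOn_const ?_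
        filter_upwards [(ae_restrict_iff' hB).2 hM] with x hx
        nlinarith [abs_mul_abs_self (u x), abs_nonneg (u x), hx]
    _ = M ^ 2 * μ.real B := by rw [setIntegral_const, smul_eq_mul, mul_comm]

noncomputable def negOn (u : Lp ℝ 2 μ) (hB : MeasurableSet B) : Lp ℝ 2 μ :=
  u - (2 : ℝ) • indicatorLp u hB

lemma abs_negOn_ae (u : Lp ℝ 2 μ) (hB : MeasurableSet B) :
    ∀ᵐ x ∂μ, |negOn u hB x| = |u x| := by
  filter_upwards [Lp.coeFn_sub u ((2 : ℝ) • indicatorLp u hB),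
    Lp.coeFn_smul (2 : ℝ) (indicatorLp u hB), coeFn_indicatorLp u hB] with x h1 h2 h3
  rw [negOn, h1, Pi.sub_apply, h2, Pi.smul_apply, h3]
  by_cases hxB : x ∈ B
  · rw [indicator_of_mem hxB, smul_eq_mul, ← abs_neg]
    ring_nf
  · simp [hxB]

lemma norm_negOn (u : Lp ℝ 2 μ) (hB : MeasurableSet B) : ‖negOn u hB‖ = ‖u‖ := by
  refine (pow_left_inj₀ (norm_nonneg _) (norm_nonneg _) two_ne_zero).1 ?_
  rw [negOn, norm_sub_two_smul_sq, inner_indicatorLp_self]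
  ring

lemma norm_negOn_sub (u : Lp ℝ 2 μ) (hB : MeasurableSet B) :
    ‖negOn u hB - u‖ = 2 * ‖indicatorLp u hB‖ := by
  rw [negOn, sub_sub_cancel_left, norm_neg, norm_smul, Real.norm_two]

end IndicatorLp

theorem exists_norm_negOn_sub_lt_and_norm_map_lt {μ : Measure ℝ} [IsFiniteMeasure μ]
    (hμ : μ ≤ volume) {F : Type*} [NormedAddCommGroup F] [InnerProductSpace ℝ F] [CompleteSpace F]
    {T : Lp ℝ 2 μ →L[ℝ] F} (hT : ∀ w, ‖T w‖ ≤ ∫ x, |w x| ∂μ) {u : Lp ℝ 2 μ} (hTu : T u ≠ 0)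
    {ε : ℝ} (hε : 0 < ε) :
    ∃ (B : Set ℝ) (hB : MeasurableSet B), ‖negOn u hB - u‖ < ε ∧ ‖T (negOn u hB)‖ < ‖T u‖ := by
  set y := T.adjoint (T u)
  have hg : 0 < ∫ x, y x * u x ∂μ := by
    rw [← L2.real_inner_eq_integral, ContinuousLinearMap.adjoint_inner_left,
      real_inner_self_eq_norm_sq]
    exact pow_pos (norm_pos_iff.2 hTu) 2
  obtain ⟨c, hc, M, hM, hP0⟩ := exists_measure_setOf_le_and_abs_le_ne_zero hg u
  have hP : MeasurableSet {x | c ≤ y x * u x ∧ |u x| ≤ M} :=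
    (measurableSet_le measurable_const
        ((Lp.stronglyMeasurable y).measurable.mul (Lp.stronglyMeasurable u).measurable)).inter
      (measurableSet_le (Lp.stronglyMeasurable u).measurable.abs measurable_const)
  obtain ⟨B, hBP, hB, hθ, hθδ⟩ := exists_subset_measureReal_pos_le hμ hP hP0
    (δ := min (c / (2 * M ^ 2)) (ε ^ 2 / (8 * M ^ 2))) (by positivity)
  set θ := μ.real B
  set w := indicatorLp u hB
  have hinner : c * θ ≤ ⟪T u, T w⟫ := by
    rw [← ContinuousLinearMap.adjoint_inner_left, inner_indicatorLp]
    exact setIntegral_ge_of_const_le_real hB (measure_ne_top _ _) (fun x hx => (hBP hx).1)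
      (L2.integrable_mul y u).integrableOn
  have hM_on_B : ∀ᵐ x ∂μ, x ∈ B → |u x| ≤ M := ae_of_all _ fun x hx => (hBP hx).2
  have hTw : ‖T w‖ ≤ M * θ := (hT w).trans (integral_abs_indicatorLp_le hB hM_on_B)
  have hw : ‖w‖ ^ 2 ≤ M ^ 2 * θ := norm_indicatorLp_sq_le hB hM_on_B
  have hθc : M ^ 2 * θ ≤ c / 2 := by
    have := hθδ.trans (min_le_left _ _)
    rw [le_div_iff₀ (by positivity)] at this
    nlinarith
  have hθε : M ^ 2 * θ ≤ ε ^ 2 / 8 := by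
    have := hθδ.trans (min_le_right _ _)
    rw [le_div_iff₀ (by positivity)] at this
    nlinarith
  refine ⟨B, hB, ?_, ?_⟩
  · rw [norm_negOn_sub]
    refine (pow_lt_pow_iff_left₀ (by positivity) hε.le two_ne_zero).1 ?_
    nlinarith
  · refine (pow_lt_pow_iff_left₀ (norm_nonneg _) (norm_nonneg _) two_ne_zero).1 ?_
    rw [negOn, map_sub, map_smul, norm_sub_two_smul_sq]
    nlinarith [pow_le_pow_left₀ (norm_nonneg _) hTw 2]

def IsVolterra (S : Lp ℝ 2 μ01 →L[ℝ] Lp ℝ 2 μ01) : Prop :=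
  ∀ u : Lp ℝ 2 μ01, ∀ᵐ x ∂μ01, S u x = ∫ ξ in Ioo 0 x, u ξ

lemma integrableOn_Ioo_zero_one (u : Lp ℝ 2 μ01) : IntegrableOn u (Ioo 0 1) :=
  (Lp.memLp u).integrable one_le_two

namespace IsVolterra

variable {S : Lp ℝ 2 μ01 →L[ℝ] Lp ℝ 2 μ01}

lemma norm_apply_le (hS : IsVolterra S) (w : Lp ℝ 2 μ01) : ‖S w‖ ≤ ∫ x, |w x| ∂μ01 := by
  have hbound : ∀ᵐ x ∂μ01, ‖S w x‖ ≤ ∫ x, |w x| ∂μ01 := by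
    filter_upwards [hS w, ae_restrict_mem measurableSet_Ioo] with x hx hx01
    rw [hx, Real.norm_eq_abs]
    calc |∫ ξ in Ioo 0 x, w ξ| ≤ ∫ ξ in Ioo 0 x, |w ξ| := abs_integral_le_integral_abs
      _ ≤ ∫ ξ in Ioo 0 1, |w ξ| :=
        setIntegral_mono_set (integrableOn_Ioo_zero_one w).abs
          (ae_of_all _ fun _ => abs_nonneg _) (Ioo_subset_Ioo_right hx01.2.le).eventuallyLE
  simpa [measureUnivNNReal] using
    Lp.norm_le_of_ae_bound (integral_nonneg fun _ => abs_nonneg _) hbound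

lemma injective (hS : IsVolterra S) : Function.Injective S := by
  refine (injective_iff_map_eq_zero S).2 fun w hw => ?_
  have hwi : IntegrableOn w (Ioo 0 1) := integrableOn_Ioo_zero_one w
  set F : ℝ → ℝ := fun x => ∫ ξ in (0 : ℝ)..x, w ξ
  have hF_ae : F =ᵐ[volume.restrict (Ioo 0 1)] 0 := by
    filter_upwards [hS w, Lp.coeFn_zero ℝ 2 μ01, ae_restrict_mem measurableSet_Ioo]
      with x hx h0 hx01
    rw [hw, h0] at hx
    simp only [F, Pi.zero_apply, intervalIntegral.integral_of_le hx01.1.le,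
      integral_Ioc_eq_integral_Ioo]
    exact hx.symm
  have hF_cont : ContinuousOn F (Ioo 0 1) :=
    (intervalIntegral.continuousOn_primitive_interval (by
      rwa [uIcc_of_le zero_le_one, integrableOn_Icc_iff_integrableOn_Ioo])).mono
      (uIcc_of_le (zero_le_one' ℝ) ▸ Ioo_subset_Icc_self)
  have hF_zero : EqOn F 0 (Ioo 0 1) :=
    Measure.eqOn_open_of_ae_eq hF_ae isOpen_Ioo hF_cont continuousOn_const
  refine Lp.eq_zero_iff_ae_eq_zero.2 ?_
  filter_upwards [ae_restrict_of_ae ((intervalIntegrable_iff_integrableOn_Ioo_of_le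
      zero_le_one).2 hwi).ae_hasDerivAt_integral, ae_restrict_mem measurableSet_Ioo] with x hx hx01
  have hFx : HasDerivAt F (w x) x :=
    hx (uIcc_of_le (zero_le_one' ℝ) ▸ Ioo_subset_Icc_self hx01) 0 (by simp)
  have hF0 : HasDerivAt F 0 x := (hasDerivAt_const x 0).congr_of_eventuallyEq
    (eventuallyEq_of_mem (isOpen_Ioo.mem_nhds hx01) hF_zero)
  exact hFx.unique hF0

lemma exists_abs_le_one_and_norm_sq_lt (hS : IsVolterra S) :
    ∃ e : Lp ℝ 2 μ01, (∀ᵐ x ∂μ01, |e x| ≤ 1) ∧ ‖S e‖ ^ 2 < 1 / 2 * ‖e‖ ^ 2 := by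
  set one : Lp ℝ 2 μ01 := Lp.const 2 μ01 (1 : ℝ)
  have hone : ∀ᵐ x ∂μ01, one x = 1 := Lp.coeFn_const 2 μ01 (1 : ℝ)
  have hB : MeasurableSet (Ioo (0 : ℝ) (1 / 4)) := measurableSet_Ioo
  have hθ : μ01.real (Ioo 0 (1 / 4)) = 1 / 4 := by
    rw [μ01, measureReal_restrict_apply hB, inter_eq_left.2 (Ioo_subset_Ioo_right (by norm_num)),
      Real.volume_real_Ioo_of_le (by norm_num)]
    norm_num
  have hone_le : ∀ᵐ x ∂μ01, x ∈ Ioo (0 : ℝ) (1 / 4) → |one x| ≤ 1 :=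
    hone.mono fun x hx _ => by rw [hx, abs_one]
  have hnorm : ‖indicatorLp one hB‖ ^ 2 = 1 / 4 := by
    rw [← inner_indicatorLp_self, inner_indicatorLp]
    calc ∫ x in Ioo 0 (1 / 4), one x * one x ∂μ01 = ∫ _ in Ioo 0 (1 / 4), (1 : ℝ) ∂μ01 :=
          setIntegral_congr_ae hB (hone.mono fun x hx _ => by rw [hx, one_mul])
      _ = 1 / 4 := by rw [setIntegral_const, hθ, smul_eq_mul, mul_one]
  refine ⟨indicatorLp one hB, ?_, ?_⟩
  · filter_upwards [coeFn_indicatorLp one hB, hone] with x hx h1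
    rw [hx]
    by_cases hxB : x ∈ Ioo (0 : ℝ) (1 / 4)
    · rw [indicator_of_mem hxB, h1, abs_one]
    · rw [indicator_of_notMem hxB, abs_zero]
      exact zero_le_one
  · have hSe := (hS.norm_apply_le _).trans (integral_abs_indicatorLp_le hB hone_le)
    rw [one_mul, hθ] at hSe
    rw [hnorm]
    nlinarith [norm_nonneg (S (indicatorLp one hB))]

lemma exists_dist_lt_and_norm_sq_sub_lt (hS : IsVolterra S) {t : ℝ} (ht : 0 < t)
    {u : Lp ℝ 2 μ01} (hu : ∀ᵐ x ∂μ01, |u x| ≤ t) {ε : ℝ} (hε : 0 < ε) :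
    ∃ v : Lp ℝ 2 μ01, (∀ᵐ x ∂μ01, |v x| ≤ t) ∧ dist v u < ε ∧
      ‖S v‖ ^ 2 - 1 / 2 * ‖v‖ ^ 2 < ‖S u‖ ^ 2 - 1 / 2 * ‖u‖ ^ 2 := by
  rcases eq_or_ne u 0 with rfl | hu0
  · obtain ⟨e, he1, he⟩ := hS.exists_abs_le_one_and_norm_sq_lt
    set a := min t (ε / (‖e‖ + 1))
    have ha : 0 < a := lt_min ht (by positivity)
    refine ⟨a • e, ?_, ?_, ?_⟩
    · filter_upwards [Lp.coeFn_smul a e, he1] with x hx hex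
      rw [hx, Pi.smul_apply, smul_eq_mul, abs_mul, abs_of_pos ha]
      nlinarith [min_le_left t (ε / (‖e‖ + 1))]
    · rw [dist_zero_right, norm_smul, Real.norm_of_nonneg ha.le]
      calc a * ‖e‖ ≤ ε / (‖e‖ + 1) * ‖e‖ :=
            mul_le_mul_of_nonneg_right (min_le_right _ _) (norm_nonneg _)
        _ < ε := by
            rw [div_mul_eq_mul_div, div_lt_iff₀ (by positivity)]
            nlinarith [norm_nonneg e]
    · rw [map_smul, norm_smul, norm_smul, Real.norm_of_nonneg ha.le, map_zero, norm_zero]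
      nlinarith [mul_lt_mul_of_pos_left he (pow_pos ha 2)]
  · obtain ⟨B, hB, hclose, hlt⟩ := exists_norm_negOn_sub_lt_and_norm_map_lt
      (Measure.restrict_le_self : μ01 ≤ volume) hS.norm_apply_le
      (fun h0 => hu0 (hS.injective (h0.trans (map_zero S).symm))) hε
    refine ⟨negOn u hB, ?_, ?_, ?_⟩
    · filter_upwards [abs_negOn_ae u hB, hu] with x h1 h2
      rwa [h1]
    · rwa [dist_eq_norm]
    · rw [norm_negOn]
      exact sub_lt_sub_right (pow_lt_pow_left₀ hlt (norm_nonneg _) two_ne_zero) _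

end IsVolterra

/-- Main counterexample: for every `h > 0`, the perturbed functional
`f_h(t,u) = t² + ‖Su‖² − (1/2)‖u‖² − ht` has no local minimizer on the cone
`C = {(t,u) : |u| ≤ t a.e.}`. -/
theorem perturbed_problem_has_no_local_minimizer
    (S : Lp ℝ 2 μ01 →L[ℝ] Lp ℝ 2 μ01)
    (hS : ∀ u : Lp ℝ 2 μ01, ∀ᵐ x ∂μ01, (S u : ℝ → ℝ) x = ∫ ξ in Ioo 0 x, u ξ)
    (h : ℝ) (hh : 0 < h) :
    ¬ ∃ p : ℝ × Lp ℝ 2 μ01, p ∈ {q : ℝ × Lp ℝ 2 μ01 | ∀ᵐ x ∂μ01, |q.2 x| ≤ q.1} ∧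
      IsLocalMinOn
        (fun q : ℝ × Lp ℝ 2 μ01 =>
          q.1 ^ 2 + ‖S q.2‖ ^ 2 - (1 / 2) * ‖q.2‖ ^ 2 - h * q.1)
        {q : ℝ × Lp ℝ 2 μ01 | ∀ᵐ x ∂μ01, |q.2 x| ≤ q.1} p := by
  rintro ⟨⟨t, u⟩, hu : ∀ᵐ x ∂μ01, |u x| ≤ t, hmin⟩
  refine not_isLocalMinOn_of_forall_exists_lt (fun ε hε => ?_) hmin
  rcases lt_or_ge t (h / 2) with ht | ht
  · set r := min (ε / 2) ((h - 2 * t) / 2)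
    have hr : 0 < r := lt_min (by linarith) (by linarith)
    refine ⟨(t + r, u), hu.mono fun x hx => hx.trans (by linarith), ?_, ?_⟩
    · rw [Prod.dist_eq, dist_self, Real.dist_eq, add_sub_cancel_left, abs_of_pos hr,
        max_eq_left hr.le]
      linarith [min_le_left (ε / 2) ((h - 2 * t) / 2)]
    · nlinarith [min_le_right (ε / 2) ((h - 2 * t) / 2)]
  · obtain ⟨v, hv, hvu, hlt⟩ :=
      IsVolterra.exists_dist_lt_and_norm_sq_sub_lt hS (by linarith) hu hε
    refine ⟨(t, v), hv, ?_, ?_⟩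
    · rwa [Prod.dist_eq, dist_self, max_eq_right dist_nonneg]
    · dsimp only
      linarith
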